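/- arXiv:2306.13453 — 7 statements merged into one kernel-verified Lean document; each statement's English description precedes it below -/
import Mathlib

section
/- Let μ₁ and μ₂ be Borel probability measures on ℝ, let a₁ < b₁, a₂ < b₂ and c₁, c₂ > 0 be such that μₖ(A) ≥ cₖ·λ(A) for every Borel set A ⊆ [aₖ, bₖ] (k = 1, 2), where λ denotes Lebesgue measure. Then for every ε with 0 < ε < min(b₁ − a₁, b₂ − a₂), the convolution μ₁ ⋆ μ₂ satisfies (μ₁ ⋆ μ₂)(A) ≥ c₁·c₂·ε·λ(A) for every Borel set A ⊆ [a₁ + a₂ + ε, b₁ + b₂ − ε]. -/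
/-!
Each `μₖ` dominates `cₖ` times Lebesgue measure restricted to `[aₖ, bₖ]`, and convolution is
monotone and bilinear, so it suffices to bound the convolution of the two restricted Lebesgue
measures. That convolution has density `z ↦ λ([a₁, b₁] ∩ (z - [a₂, b₂]))`, and for
`z ∈ [a₁ + a₂ + ε, b₁ + b₂ - ε]` this intersection is an interval of length at least `ε`.
-/

open MeasureTheory

/-- The convolution of two Borel measures on `ℝ`: the pushforward of the product
measure under addition. -/
noncomputable def convMeas (μ ν : Measure ℝ) : Measure ℝ :=
  (μ.prod ν).map (fun p : ℝ × ℝ => p.1 + p.2)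

open Set
open scoped ENNReal

namespace MeasureTheory.Measure

theorem restrict_le_of_forall_subset_le {α : Type*} [MeasurableSpace α] {μ ν : Measure α}
    {s : Set α} (hs : MeasurableSet s) (h : ∀ t ⊆ s, MeasurableSet t → ν t ≤ μ t) :
    ν.restrict s ≤ μ := by
  refine le_iff.2 fun t ht => ?_
  rw [restrict_apply ht]
  exact (h _ inter_subset_right (ht.inter hs)).trans (measure_mono inter_subset_left)

theorem conv_mono {M : Type*} [AddMonoid M] [MeasurableSpace M] [MeasurableAdd₂ M]
    {μ μ' ν ν' : Measure M} [SFinite ν'] (hμ : μ ≤ μ') (hν : ν ≤ ν') : μ ∗ ν ≤ μ' ∗ ν' :=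
  map_mono (prod_mono hμ hν) measurable_add

theorem conv_restrict_apply {G : Type*} [AddCommGroup G] [MeasurableSpace G] [MeasurableAdd₂ G]
    [MeasurableNeg G] (μ : Measure G) [SFinite μ] [μ.IsAddLeftInvariant]
    {s t A : Set G} (ht : MeasurableSet t) (hA : MeasurableSet A) :
    (μ.restrict s ∗ μ.restrict t) A = ∫⁻ z in A, μ ((z - ·) ⁻¹' t ∩ s) ∂μ := by
  have hmeas : Measurable fun p : G × G => t.indicator (1 : G → ℝ≥0∞) (p.2 - p.1) :=
    (measurable_one.indicator ht).comp (measurable_snd.sub measurable_fst)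
  have hslice : ∀ x, μ.restrict t ((x + ·) ⁻¹' A) = ∫⁻ z in A, t.indicator 1 (z - x) ∂μ := by
    intro x
    have hpre : (x + ·) ⁻¹' A ∩ t = (x + ·) ⁻¹' ((· - x) ⁻¹' t ∩ A) := by
      ext y; simp [and_comm]
    rw [restrict_apply (measurable_const_add x hA), hpre, measure_preimage_add,
      ← restrict_apply (measurable_sub_const x ht),
      ← lintegral_indicator_one (measurable_sub_const x ht)]
    rfl
  calc (μ.restrict s ∗ μ.restrict t) A
      = ∫⁻ x in s, μ.restrict t ((x + ·) ⁻¹' A) ∂μ := by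
        rw [conv, map_apply measurable_add hA, prod_apply (measurable_add hA)]; rfl
    _ = ∫⁻ x in s, ∫⁻ z in A, t.indicator 1 (z - x) ∂μ ∂μ := by simp_rw [hslice]
    _ = ∫⁻ z in A, ∫⁻ x in s, t.indicator 1 (z - x) ∂μ ∂μ :=
        lintegral_lintegral_swap hmeas.aemeasurable
    _ = ∫⁻ z in A, μ ((z - ·) ⁻¹' t ∩ s) ∂μ := by
        refine lintegral_congr fun z => ?_
        rw [← restrict_apply (measurable_const_sub z ht),
          ← lintegral_indicator_one (measurable_const_sub z ht)]
        rfl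

end MeasureTheory.Measure

theorem convMeas_eq_conv (μ ν : Measure ℝ) : convMeas μ ν = μ ∗ ν := rfl

theorem Real.ofReal_le_volume_preimage_const_sub_Icc_inter_Icc {a₁ b₁ a₂ b₂ ε z : ℝ}
    (h₁ : ε ≤ b₁ - a₁) (h₂ : ε ≤ b₂ - a₂) (hz : z ∈ Icc (a₁ + a₂ + ε) (b₁ + b₂ - ε)) :
    ENNReal.ofReal ε ≤ volume ((z - ·) ⁻¹' Icc a₂ b₂ ∩ Icc a₁ b₁) := by
  rw [preimage_const_sub_Icc, Icc_inter_Icc, Real.volume_Icc]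
  refine ENNReal.ofReal_le_ofReal (le_sub_iff_add_le'.2 ?_)
  obtain ⟨hz₁, hz₂⟩ := hz
  rw [← max_add_add_right]
  exact le_min (max_le (by linarith) (by linarith)) (max_le (by linarith) (by linarith))

theorem Real.ofReal_mul_volume_le_conv_restrict_Icc {a₁ b₁ a₂ b₂ ε : ℝ} {A : Set ℝ}
    (h₁ : ε ≤ b₁ - a₁) (h₂ : ε ≤ b₂ - a₂) (hA : MeasurableSet A)
    (hAsub : A ⊆ Icc (a₁ + a₂ + ε) (b₁ + b₂ - ε)) :
    ENNReal.ofReal ε * volume A ≤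
      (volume.restrict (Icc a₁ b₁) ∗ volume.restrict (Icc a₂ b₂)) A := by
  rw [Measure.conv_restrict_apply volume measurableSet_Icc hA, ← setLIntegral_const]
  exact setLIntegral_mono' hA fun z hz =>
    Real.ofReal_le_volume_preimage_const_sub_Icc_inter_Icc h₁ h₂ (hAsub hz)

theorem stmt_1_general (μ₁ μ₂ : Measure ℝ) [IsProbabilityMeasure μ₂]
    (a₁ b₁ a₂ b₂ c₁ c₂ : ℝ) (hc₁ : 0 < c₁) (hc₂ : 0 < c₂)
    (hμ₁ : ∀ A : Set ℝ, A ⊆ Set.Icc a₁ b₁ → MeasurableSet A →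
      ENNReal.ofReal c₁ * volume A ≤ μ₁ A)
    (hμ₂ : ∀ A : Set ℝ, A ⊆ Set.Icc a₂ b₂ → MeasurableSet A →
      ENNReal.ofReal c₂ * volume A ≤ μ₂ A)
    (ε : ℝ) (hε : ε < min (b₁ - a₁) (b₂ - a₂)) :
    ∀ A : Set ℝ, A ⊆ Set.Icc (a₁ + a₂ + ε) (b₁ + b₂ - ε) → MeasurableSet A →
      ENNReal.ofReal (c₁ * c₂ * ε) * volume A ≤ convMeas μ₁ μ₂ A := by
  intro A hAsub hA
  have hν₁ : ENNReal.ofReal c₁ • volume.restrict (Icc a₁ b₁) ≤ μ₁ := by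
    rw [← Measure.restrict_smul]
    exact Measure.restrict_le_of_forall_subset_le measurableSet_Icc hμ₁
  have hν₂ : ENNReal.ofReal c₂ • volume.restrict (Icc a₂ b₂) ≤ μ₂ := by
    rw [← Measure.restrict_smul]
    exact Measure.restrict_le_of_forall_subset_le measurableSet_Icc hμ₂
  calc ENNReal.ofReal (c₁ * c₂ * ε) * volume A
      = ENNReal.ofReal c₁ * ENNReal.ofReal c₂ * (ENNReal.ofReal ε * volume A) := by
        rw [ENNReal.ofReal_mul (by positivity), ENNReal.ofReal_mul hc₁.le, mul_assoc]
    _ ≤ ENNReal.ofReal c₁ * ENNReal.ofReal c₂ *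
          (volume.restrict (Icc a₁ b₁) ∗ volume.restrict (Icc a₂ b₂)) A := by
        gcongr
        exact Real.ofReal_mul_volume_le_conv_restrict_Icc (hε.le.trans (min_le_left _ _))
          (hε.le.trans (min_le_right _ _)) hA hAsub
    _ = ((ENNReal.ofReal c₁ • volume.restrict (Icc a₁ b₁)) ∗
          (ENNReal.ofReal c₂ • volume.restrict (Icc a₂ b₂))) A := by
        rw [Measure.conv_smul_left, Measure.conv_smul_right]
        simp only [Measure.smul_apply, smul_eq_mul, mul_assoc]
    _ ≤ convMeas μ₁ μ₂ A := by
        rw [convMeas_eq_conv]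
        exact Measure.conv_mono hν₁ hν₂ A

/-- If `μₖ ≥ cₖ·λ` on Borel subsets of `[aₖ,bₖ]`, then for `0 < ε < min(b₁-a₁, b₂-a₂)`,
the convolution `μ₁ ⋆ μ₂ ≥ c₁c₂ε·λ` on Borel subsets of `[a₁+a₂+ε, b₁+b₂-ε]`. -/
theorem stmt_1 (μ₁ μ₂ : Measure ℝ) [IsProbabilityMeasure μ₁] [IsProbabilityMeasure μ₂]
    (a₁ b₁ a₂ b₂ c₁ c₂ : ℝ) (hab₁ : a₁ < b₁) (hab₂ : a₂ < b₂) (hc₁ : 0 < c₁) (hc₂ : 0 < c₂)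
    (hμ₁ : ∀ A : Set ℝ, A ⊆ Set.Icc a₁ b₁ → MeasurableSet A →
      ENNReal.ofReal c₁ * volume A ≤ μ₁ A)
    (hμ₂ : ∀ A : Set ℝ, A ⊆ Set.Icc a₂ b₂ → MeasurableSet A →
      ENNReal.ofReal c₂ * volume A ≤ μ₂ A)
    (ε : ℝ) (hε0 : 0 < ε) (hε : ε < min (b₁ - a₁) (b₂ - a₂)) :
    ∀ A : Set ℝ, A ⊆ Set.Icc (a₁ + a₂ + ε) (b₁ + b₂ - ε) → MeasurableSet A →
      ENNReal.ofReal (c₁ * c₂ * ε) * volume A ≤ convMeas μ₁ μ₂ A :=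
  stmt_1_general μ₁ μ₂ a₁ b₁ a₂ b₂ c₁ c₂ hc₁ hc₂ hμ₁ hμ₂ ε hε
end

section
/- Let ν be a Borel measure on ℝ, c > 0, and let B ⊆ ℝ be an interval with λ(B) ≥ 1 such that ν(A) ≥ c·λ(A) for every Borel set A ⊆ B, where λ is Lebesgue measure. Then for every x₀ ∈ ℝ, the pushforward of ν under the map x ↦ frac(x₀ + x) satisfies: for every Borel set A ⊆ [0,1), (pushforward measure)(A) ≥ c·λ(A). -/
open MeasureTheory

open Set in
/-- Shift a periodic set intersection by an integer. -/
lemma per_shift_int (S : Set ℝ) (hper : ∀ (n : ℤ) (x : ℝ), x + (n : ℝ) ∈ S ↔ x ∈ S)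
    (u : ℝ) (n : ℤ) :
    volume (S ∩ Set.Ico (u + n) (u + n + 1)) = volume (S ∩ Set.Ico u (u + 1)) := by
  have : (fun x : ℝ => x + (-n : ℝ)) ⁻¹' (S ∩ Set.Ico u (u + 1))
      = S ∩ Set.Ico (u + n) (u + n + 1) := by
    ext x
    simp only [Set.mem_preimage, Set.mem_inter_iff, Set.mem_Ico]
    constructor
    · rintro ⟨hS, h1, h2⟩
      have hx : x + ((-n : ℤ) : ℝ) ∈ S := by push_cast; exact hS
      rw [hper] at hx
      exact ⟨hx, by linarith, by linarith⟩
    · rintro ⟨hS, h1, h2⟩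
      have hx : x + ((-n : ℤ) : ℝ) ∈ S := by rw [hper]; exact hS
      push_cast at hx
      exact ⟨hx, by constructor <;> linarith⟩
  rw [← this, measure_preimage_add_right]

open Set in
lemma per_unit (S : Set ℝ) (hS : MeasurableSet S)
    (hper : ∀ (n : ℤ) (x : ℝ), x + (n : ℝ) ∈ S ↔ x ∈ S) (t u : ℝ) :
    volume (S ∩ Set.Ico t (t + 1)) = volume (S ∩ Set.Ico u (u + 1)) := by
  -- reduce to showing each equals the measure over [⌈·⌉, ⌈·⌉+1)
  suffices key : ∀ v : ℝ, volume (S ∩ Set.Ico v (v + 1)) = volume (S ∩ Set.Ico 0 1) by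
    rw [key t, key u]
  intro v
  set n : ℤ := ⌈v⌉ with hn
  have h1 : v ≤ (n : ℝ) := Int.le_ceil v
  have h2 : (n : ℝ) < v + 1 := Int.ceil_lt_add_one v
  -- split [v, v+1) = [v, n) ∪ [n, v+1)
  have hsplit1 : S ∩ Set.Ico v (v + 1) = (S ∩ Set.Ico v n) ∪ (S ∩ Set.Ico n (v + 1)) := by
    rw [← Set.inter_union_distrib_left, Set.Ico_union_Ico_eq_Ico h1 (le_of_lt h2)]
  have hsplit2 : S ∩ Set.Ico (n : ℝ) ((n : ℝ) + 1)
      = (S ∩ Set.Ico (n : ℝ) (v + 1)) ∪ (S ∩ Set.Ico (v + 1) ((n : ℝ) + 1)) := by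
    rw [← Set.inter_union_distrib_left, Set.Ico_union_Ico_eq_Ico (le_of_lt h2) (by linarith)]
  have hd1 : Disjoint (S ∩ Set.Ico v (n : ℝ)) (S ∩ Set.Ico (n : ℝ) (v + 1)) :=
    (Set.Ico_disjoint_Ico_same).mono inter_subset_right inter_subset_right
  have hd2 : Disjoint (S ∩ Set.Ico (n : ℝ) (v + 1)) (S ∩ Set.Ico (v + 1) ((n : ℝ) + 1)) :=
    (Set.Ico_disjoint_Ico_same).mono inter_subset_right inter_subset_right
  have hm : ∀ a b : ℝ, MeasurableSet (S ∩ Set.Ico a b) :=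
    fun a b => hS.inter measurableSet_Ico
  -- the left piece shifts by 1 onto the right tail piece
  have hshift : volume (S ∩ Set.Ico (v + 1) ((n : ℝ) + 1)) = volume (S ∩ Set.Ico v (n : ℝ)) := by
    have : (fun x : ℝ => x + (-1 : ℝ)) ⁻¹' (S ∩ Set.Ico v (n : ℝ))
        = S ∩ Set.Ico (v + 1) ((n : ℝ) + 1) := by
      ext x
      simp only [Set.mem_preimage, Set.mem_inter_iff, Set.mem_Ico]
      constructor
      · rintro ⟨hSx, ha, hb⟩
        have hx : x + ((-1 : ℤ) : ℝ) ∈ S := by push_cast; exact hSx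
        rw [hper] at hx
        exact ⟨hx, by linarith, by linarith⟩
      · rintro ⟨hSx, ha, hb⟩
        have hx : x + ((-1 : ℤ) : ℝ) ∈ S := by rw [hper]; exact hSx
        push_cast at hx
        exact ⟨hx, by linarith, by linarith⟩
    rw [← this, measure_preimage_add_right]
  have e1 : volume (S ∩ Set.Ico v (v + 1))
      = volume (S ∩ Set.Ico v (n : ℝ)) + volume (S ∩ Set.Ico (n : ℝ) (v + 1)) := by
    rw [hsplit1, measure_union hd1 (hm _ _)]
  have e2 : volume (S ∩ Set.Ico (n : ℝ) ((n : ℝ) + 1))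
      = volume (S ∩ Set.Ico (n : ℝ) (v + 1)) + volume (S ∩ Set.Ico (v + 1) ((n : ℝ) + 1)) := by
    rw [hsplit2, measure_union hd2 (hm _ _)]
  have e3 : volume (S ∩ Set.Ico (n : ℝ) ((n : ℝ) + 1)) = volume (S ∩ Set.Ico 0 1) := by
    have := per_shift_int S hper 0 n
    simpa using this
  rw [e1, ← e3, e2, hshift, add_comm]

/-- An order-connected set of measure at least 1 contains an open unit interval. -/
lemma exists_unit_subinterval (B : Set ℝ) (hB : B.OrdConnected) (hBvol : 1 ≤ volume B) :
    ∃ a : ℝ, Set.Ioo a (a + 1) ⊆ B := by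
  have hne : B.Nonempty := by
    rcases Set.eq_empty_or_nonempty B with h | h
    · exfalso; rw [h] at hBvol; simp at hBvol
    · exact h
  obtain ⟨x, hx⟩ := hne
  by_cases hba : BddAbove B
  · by_cases hbb : BddBelow B
    · -- bounded: use sInf and sSup
      set a := sInf B
      set b := sSup B
      have hab : B ⊆ Set.Icc a b := fun z hz =>
        ⟨csInf_le hbb hz, le_csSup hba hz⟩
      have hIoo : Set.Ioo a b ⊆ B := by
        intro z hz
        obtain ⟨p, hp, hpz⟩ := exists_lt_of_csInf_lt ⟨x, hx⟩ hz.1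
        obtain ⟨q, hq, hqz⟩ := exists_lt_of_lt_csSup ⟨x, hx⟩ hz.2
        exact hB.out hp hq ⟨le_of_lt hpz, le_of_lt hqz⟩
      have hvol : volume B ≤ ENNReal.ofReal (b - a) := by
        calc volume B ≤ volume (Set.Icc a b) := measure_mono hab
          _ = ENNReal.ofReal (b - a) := Real.volume_Icc
      have h1 : (1 : ℝ) ≤ b - a := by
        by_contra h
        push_neg at h
        have : volume B < 1 := lt_of_le_of_lt hvol (ENNReal.ofReal_lt_one.mpr h)
        exact absurd hBvol (not_le.mpr this)
      exact ⟨a, fun z hz => hIoo ⟨hz.1, lt_of_lt_of_le hz.2 (by linarith)⟩⟩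
    · -- unbounded below
      rw [not_bddBelow_iff] at hbb
      obtain ⟨y, hy, hyx⟩ := hbb (x - 2)
      refine ⟨x - 2, fun z hz => hB.out hy hx ⟨?_, ?_⟩⟩
      · exact le_of_lt (lt_of_lt_of_le hyx (le_of_lt hz.1))
      · have := hz.2; linarith [hz.2]
  · -- unbounded above
    rw [not_bddAbove_iff] at hba
    obtain ⟨y, hy, hxy⟩ := hba (x + 2)
    refine ⟨x, fun z hz => hB.out hx hy ⟨le_of_lt hz.1, ?_⟩⟩
    have := hz.2; linarith

/-- If `ν ≥ c·λ` on Borel subsets of an interval `B` of Lebesgue measure at least `1`,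
then for every `x₀` the pushforward of `ν` under `x ↦ frac(x₀ + x)` dominates `c·λ` on
Borel subsets of `[0,1)`. -/
theorem stmt_3 (ν : Measure ℝ) (c : ℝ) (hc : 0 < c) (B : Set ℝ)
    (hB : B.OrdConnected) (hBvol : 1 ≤ volume B)
    (hν : ∀ A : Set ℝ, A ⊆ B → MeasurableSet A → ENNReal.ofReal c * volume A ≤ ν A)
    (x₀ : ℝ) :
    ∀ A : Set ℝ, A ⊆ Set.Ico (0:ℝ) 1 → MeasurableSet A →
      ENNReal.ofReal c * volume A ≤ (ν.map (fun x => Int.fract (x₀ + x))) A := by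
  intro A hA01 hA
  have hf : Measurable (fun x : ℝ => Int.fract (x₀ + x)) :=
    measurable_fract.comp (measurable_const.add measurable_id)
  rw [Measure.map_apply hf hA]
  set S : Set ℝ := (fun x : ℝ => Int.fract (x₀ + x)) ⁻¹' A with hSdef
  have hSmeas : MeasurableSet S := hf hA
  have hper : ∀ (n : ℤ) (x : ℝ), x + (n : ℝ) ∈ S ↔ x ∈ S := by
    intro n x
    simp only [hSdef, Set.mem_preimage]
    rw [show x₀ + (x + (n : ℝ)) = (x₀ + x) + (n : ℝ) by ring, Int.fract_add_intCast]
  obtain ⟨a, ha⟩ := exists_unit_subinterval B hB hBvol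
  -- volume of S on the unit interval starting at -x₀ equals volume A
  have hkey : volume (S ∩ Set.Ico (-x₀) (-x₀ + 1)) = volume A := by
    have heq : S ∩ Set.Ico (-x₀) (-x₀ + 1) = (fun x : ℝ => x₀ + x) ⁻¹' A := by
      ext x
      simp only [hSdef, Set.mem_inter_iff, Set.mem_preimage, Set.mem_Ico]
      constructor
      · rintro ⟨hSx, h1, h2⟩
        rwa [Int.fract_eq_self.mpr ⟨by linarith, by linarith⟩] at hSx
      · intro hAx
        have hx01 := hA01 hAx
        rw [Set.mem_Ico] at hx01
        refine ⟨?_, by linarith [hx01.1], by linarith [hx01.2]⟩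
        rwa [Int.fract_eq_self.mpr ⟨hx01.1, hx01.2⟩]
    rw [heq, measure_preimage_add]
  -- measure of S on any unit interval equals volume A
  have hunit : volume (S ∩ Set.Ico a (a + 1)) = volume A := by
    rw [per_unit S hSmeas hper a (-x₀), hkey]
  -- S ∩ Ioo a (a+1) has the same volume (differ by one point)
  have hIoo : volume A ≤ volume (S ∩ Set.Ioo a (a + 1)) := by
    have hsub : S ∩ Set.Ico a (a + 1) ⊆ (S ∩ Set.Ioo a (a + 1)) ∪ {a} := by
      intro z hz
      rcases eq_or_lt_of_le hz.2.1 with h | h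
      · right; simp [← h]
      · left; exact ⟨hz.1, h, hz.2.2⟩
    calc volume A = volume (S ∩ Set.Ico a (a + 1)) := hunit.symm
      _ ≤ volume ((S ∩ Set.Ioo a (a + 1)) ∪ {a}) := measure_mono hsub
      _ ≤ volume (S ∩ Set.Ioo a (a + 1)) + volume ({a} : Set ℝ) := measure_union_le _ _
      _ = volume (S ∩ Set.Ioo a (a + 1)) := by simp
  have hSB : S ∩ Set.Ioo a (a + 1) ⊆ B := fun z hz => ha hz.2
  have hSBmeas : MeasurableSet (S ∩ Set.Ioo a (a + 1)) := hSmeas.inter measurableSet_Ioo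
  calc ENNReal.ofReal c * volume A
      ≤ ENNReal.ofReal c * volume (S ∩ Set.Ioo a (a + 1)) := by
        exact mul_le_mul_right hIoo _
    _ ≤ ν (S ∩ Set.Ioo a (a + 1)) := hν _ hSB hSBmeas
    _ ≤ ν S := measure_mono Set.inter_subset_left
end

section
/- Let ε ≥ 0, let p ≥ 1 be a real number, let ι be a finite index set, let δ ≥ 0, and let x, y : ι → ℝ² be families of points with ‖x_i − y_i‖_∞ ≤ δ for every i ∈ ι. Then |Σ_{i∈ι} w_ε(x_i)^p − Σ_{i∈ι} w_ε(y_i)^p| ≤ 2pδ·(Σ_{i∈ι} w_ε(x_i)^{p−1} + Σ_{i∈ι} w_ε(y_i)^{p−1}). -/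
/-- The `ε`-truncated persistence weight of a point `(b,d) ∈ ℝ²`:
`w_ε(b,d) = max (d - b - ε) 0`. -/
noncomputable def wtrunc (ε : ℝ) (z : ℝ × ℝ) : ℝ := max (z.2 - z.1 - ε) 0

lemma wtrunc_nonneg (ε : ℝ) (z : ℝ × ℝ) : 0 ≤ wtrunc ε z := le_max_right _ _

/-- MVT bound: for `0 ≤ b ≤ a`, `a^p - b^p ≤ p * a^(p-1) * (a - b)`. -/
lemma rpow_sub_rpow_le_aux {a b p : ℝ} (hb : 0 ≤ b) (hba : b ≤ a) (hp : 1 ≤ p) :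
    a ^ p - b ^ p ≤ p * a ^ (p - 1) * (a - b) := by
  rcases eq_or_lt_of_le hba with rfl | h
  · simp
  · have hdiff : ∀ t : ℝ, HasDerivAt (fun s : ℝ => s ^ p) (p * t ^ (p - 1)) t := by
      intro t
      simpa using Real.hasDerivAt_rpow_const (x := t) (p := p) (Or.inr hp)
    obtain ⟨c, hc, hceq⟩ := exists_hasDerivAt_eq_slope (fun s : ℝ => s ^ p)
      (fun t => p * t ^ (p - 1)) h
      (fun t _ => (hdiff t).continuousAt.continuousWithinAt)
      (fun t _ => hdiff t)
    have hc0 : 0 ≤ c := le_of_lt (lt_of_le_of_lt hb hc.1)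
    have hkey : p * c ^ (p - 1) = (a ^ p - b ^ p) / (a - b) := hceq
    have hcb : c ^ (p - 1) ≤ a ^ (p - 1) :=
      Real.rpow_le_rpow hc0 (le_of_lt hc.2) (by linarith)
    have hab : 0 < a - b := by linarith
    have : (a ^ p - b ^ p) / (a - b) ≤ p * a ^ (p - 1) := by
      rw [← hkey]
      have hp0 : 0 ≤ p := by linarith
      nlinarith
    calc a ^ p - b ^ p = (a ^ p - b ^ p) / (a - b) * (a - b) := by
          field_simp
      _ ≤ p * a ^ (p - 1) * (a - b) := by
          apply mul_le_mul_of_nonneg_right this (le_of_lt hab)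

/-- Pointwise bound: `|a^p - b^p| ≤ p * (a^(p-1) + b^(p-1)) * |a - b|` for `a, b ≥ 0`. -/
lemma abs_rpow_sub_rpow_le {a b p : ℝ} (ha : 0 ≤ a) (hb : 0 ≤ b) (hp : 1 ≤ p) :
    |a ^ p - b ^ p| ≤ p * (a ^ (p - 1) + b ^ (p - 1)) * |a - b| := by
  have hp0 : 0 ≤ p := by linarith
  wlog hba : b ≤ a generalizing a b
  · rw [abs_sub_comm, abs_sub_comm a b]
    have := this hb ha (le_of_lt (not_le.mp hba))
    calc |b ^ p - a ^ p| ≤ p * (b ^ (p - 1) + a ^ (p - 1)) * |b - a| := this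
      _ = p * (a ^ (p - 1) + b ^ (p - 1)) * |b - a| := by ring
  · have h1 : a ^ p - b ^ p ≤ p * a ^ (p - 1) * (a - b) := rpow_sub_rpow_le_aux hb hba hp
    have h2 : 0 ≤ b ^ p := Real.rpow_nonneg hb p
    have h3 : b ^ p ≤ a ^ p := Real.rpow_le_rpow hb hba hp0
    rw [abs_of_nonneg (by linarith), abs_of_nonneg (by linarith)]
    have hbp : 0 ≤ b ^ (p - 1) := Real.rpow_nonneg hb _
    nlinarith [mul_nonneg (mul_nonneg hp0 hbp) (sub_nonneg.mpr hba)]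

/-- Lipschitz continuity of total truncated `p`-persistence (per-matching form):
if `‖x_i − y_i‖_∞ ≤ δ` for all `i`, then
`|Σ w_ε(x_i)^p − Σ w_ε(y_i)^p| ≤ 2pδ (Σ w_ε(x_i)^{p-1} + Σ w_ε(y_i)^{p-1})`. -/
theorem stmt_6 (ε δ p : ℝ) (hε : 0 ≤ ε) (hδ : 0 ≤ δ) (hp : 1 ≤ p)
    {ι : Type*} [Fintype ι] (x y : ι → ℝ × ℝ)
    (hxy : ∀ i, max |(x i).1 - (y i).1| |(x i).2 - (y i).2| ≤ δ) :
    |∑ i, wtrunc ε (x i) ^ p - ∑ i, wtrunc ε (y i) ^ p|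
      ≤ 2 * p * δ *
        (∑ i, wtrunc ε (x i) ^ (p - 1) + ∑ i, wtrunc ε (y i) ^ (p - 1)) := by
  have hp0 : 0 ≤ p := by linarith
  have key : ∀ i, |wtrunc ε (x i) ^ p - wtrunc ε (y i) ^ p|
      ≤ 2 * p * δ * (wtrunc ε (x i) ^ (p - 1) + wtrunc ε (y i) ^ (p - 1)) := by
    intro i
    have h1 : |(x i).1 - (y i).1| ≤ δ := le_trans (le_max_left _ _) (hxy i)
    have h2 : |(x i).2 - (y i).2| ≤ δ := le_trans (le_max_right _ _) (hxy i)
    have hw : |wtrunc ε (x i) - wtrunc ε (y i)| ≤ 2 * δ := by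
      have : |wtrunc ε (x i) - wtrunc ε (y i)|
          ≤ |((x i).2 - (x i).1 - ε) - ((y i).2 - (y i).1 - ε)| := by
        unfold wtrunc
        exact abs_max_sub_max_le_abs _ _ _
      have habs : |((x i).2 - (x i).1 - ε) - ((y i).2 - (y i).1 - ε)|
          ≤ |(x i).2 - (y i).2| + |(x i).1 - (y i).1| := by
        have : ((x i).2 - (x i).1 - ε) - ((y i).2 - (y i).1 - ε)
            = ((x i).2 - (y i).2) - ((x i).1 - (y i).1) := by ring
        rw [this]
        exact abs_sub _ _
      linarith
    have := abs_rpow_sub_rpow_le (wtrunc_nonneg ε (x i)) (wtrunc_nonneg ε (y i)) hp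
    have hs : 0 ≤ wtrunc ε (x i) ^ (p - 1) + wtrunc ε (y i) ^ (p - 1) := by
      have := Real.rpow_nonneg (wtrunc_nonneg ε (x i)) (p - 1)
      have := Real.rpow_nonneg (wtrunc_nonneg ε (y i)) (p - 1)
      linarith
    calc |wtrunc ε (x i) ^ p - wtrunc ε (y i) ^ p|
        ≤ p * (wtrunc ε (x i) ^ (p - 1) + wtrunc ε (y i) ^ (p - 1))
          * |wtrunc ε (x i) - wtrunc ε (y i)| := this
      _ ≤ p * (wtrunc ε (x i) ^ (p - 1) + wtrunc ε (y i) ^ (p - 1)) * (2 * δ) := by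
          apply mul_le_mul_of_nonneg_left hw (by positivity)
      _ = 2 * p * δ * (wtrunc ε (x i) ^ (p - 1) + wtrunc ε (y i) ^ (p - 1)) := by ring
  calc |∑ i, wtrunc ε (x i) ^ p - ∑ i, wtrunc ε (y i) ^ p|
      = |∑ i, (wtrunc ε (x i) ^ p - wtrunc ε (y i) ^ p)| := by
        rw [Finset.sum_sub_distrib]
    _ ≤ ∑ i, |wtrunc ε (x i) ^ p - wtrunc ε (y i) ^ p| :=
        Finset.abs_sum_le_sum_abs _ _
    _ ≤ ∑ i, 2 * p * δ * (wtrunc ε (x i) ^ (p - 1) + wtrunc ε (y i) ^ (p - 1)) :=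
        Finset.sum_le_sum fun i _ => key i
    _ = 2 * p * δ * (∑ i, wtrunc ε (x i) ^ (p - 1) + ∑ i, wtrunc ε (y i) ^ (p - 1)) := by
        rw [← Finset.mul_sum, Finset.sum_add_distrib]
end

section
/- Let ε ≥ 0, c ≥ 0, let p > 0 be a real number, let ι be a finite index set, and let x, y : ι → ℝ² be families of points with ‖x_i − y_i‖_∞ ≤ c for every i ∈ ι. Then Σ_{i∈ι} w_ε(y_i)^p ≥ Σ_{i∈ι} w_{ε+2c}(x_i)^p. -/
/-- Lower bound on truncated `p`-persistence of a perturbation (per-matching form):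
if `‖x_i − y_i‖_∞ ≤ c` for all `i`, then `Σ w_ε(y_i)^p ≥ Σ w_{ε+2c}(x_i)^p`. -/
theorem stmt_7 (ε c p : ℝ) (hε : 0 ≤ ε) (hc : 0 ≤ c) (hp : 0 < p)
    {ι : Type*} [Fintype ι] (x y : ι → ℝ × ℝ)
    (hxy : ∀ i, max |(x i).1 - (y i).1| |(x i).2 - (y i).2| ≤ c) :
    ∑ i, wtrunc (ε + 2 * c) (x i) ^ p ≤ ∑ i, wtrunc ε (y i) ^ p := by
  apply Finset.sum_le_sum
  intro i _
  have h1 : |(x i).1 - (y i).1| ≤ c := le_trans (le_max_left _ _) (hxy i)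
  have h2 : |(x i).2 - (y i).2| ≤ c := le_trans (le_max_right _ _) (hxy i)
  rw [abs_le] at h1 h2
  have hle : wtrunc (ε + 2 * c) (x i) ≤ wtrunc ε (y i) := by
    unfold wtrunc
    apply max_le _ (le_max_right _ _)
    apply le_max_of_le_left
    linarith [h1.1, h1.2, h2.1, h2.2]
  exact Real.rpow_le_rpow (le_max_right _ _) hle hp.le
end

section
/- Let 𝕋 be a set, let L, C, U, ε, δ ≥ 0, and let p ≥ 1 be a real number. Let k : ℝ² → (𝕋 → ℝ) satisfy: (i) |k(x)(t) − k(x')(t)| ≤ L·‖x − x'‖_∞ for all x, x' ∈ ℝ² and all t ∈ 𝕋; (ii) |k((r,r))(t)| ≤ C for all r ∈ ℝ and t ∈ 𝕋. Let ι be a finite index set and let x, y : ι → ℝ² with x_i = (b_i, d_i), y_i = (b_i', d_i') satisfying b_i ≤ d_i ≤ b_i + U, b_i' ≤ d_i' ≤ b_i' + U, and ‖x_i − y_i‖_∞ ≤ δ for every i. Assume W_x := Σ_i w_ε(x_i)^p > 0 and W_y := Σ_i w_ε(y_i)^p > 0, and define the normalized functionals F̄_x(t) = (Σ_i w_ε(x_i)^p·k(x_i)(t))/W_x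 and F̄_y(t) = (Σ_i w_ε(y_i)^p·k(y_i)(t))/W_y. Then for every t ∈ 𝕋: |F̄_x(t) − F̄_y(t)| ≤ (L + 4p(LU + C)·(Σ_i w_ε(x_i)^{p−1} + Σ_i w_ε(y_i)^{p−1})/W_x)·δ. -/
lemma rpow_sub_rpow_le_aux_s9 {p v w : ℝ} (hp : 1 ≤ p) (hv : 0 ≤ v) (hvw : v ≤ w) :
    w ^ p - v ^ p ≤ p * w ^ (p - 1) * (w - v) := by
  have hw : 0 ≤ w := hv.trans hvw
  have hconv : Convex ℝ (Set.Icc v w) := convex_Icc _ _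
  have hderiv : ∀ s ∈ Set.Icc v w,
      HasDerivWithinAt (fun x : ℝ => x ^ p) (p * s ^ (p - 1)) (Set.Icc v w) s :=
    fun s _ => (Real.hasDerivAt_rpow_const (Or.inr hp)).hasDerivWithinAt
  have hbound : ∀ s ∈ Set.Icc v w, ‖p * s ^ (p - 1)‖ ≤ p * w ^ (p - 1) := by
    intro s hs
    have hs0 : 0 ≤ s := hv.trans hs.1
    rw [Real.norm_eq_abs, abs_of_nonneg (by positivity)]
    exact mul_le_mul_of_nonneg_left
      (Real.rpow_le_rpow hs0 hs.2 (by linarith)) (by linarith)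
  have := hconv.norm_image_sub_le_of_norm_hasDerivWithin_le hderiv hbound
    (Set.left_mem_Icc.2 hvw) (Set.right_mem_Icc.2 hvw)
  rw [Real.norm_eq_abs, Real.norm_eq_abs] at this
  calc w ^ p - v ^ p ≤ |w ^ p - v ^ p| := le_abs_self _
    _ ≤ p * w ^ (p - 1) * |w - v| := this
    _ = p * w ^ (p - 1) * (w - v) := by rw [abs_of_nonneg (by linarith)]

lemma abs_rpow_sub_rpow_le_s9 {p v w : ℝ} (hp : 1 ≤ p) (hv : 0 ≤ v) (hw : 0 ≤ w) :
    |w ^ p - v ^ p| ≤ p * (w ^ (p - 1) + v ^ (p - 1)) * |w - v| := by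
  rcases le_total v w with h | h
  · rw [abs_of_nonneg (sub_nonneg.2 (Real.rpow_le_rpow hv h (by linarith))),
      abs_of_nonneg (sub_nonneg.2 h)]
    calc w ^ p - v ^ p ≤ p * w ^ (p - 1) * (w - v) := rpow_sub_rpow_le_aux_s9 hp hv h
      _ ≤ p * (w ^ (p - 1) + v ^ (p - 1)) * (w - v) := by
          have h1 : (0:ℝ) ≤ v ^ (p - 1) := Real.rpow_nonneg hv _
          nlinarith [mul_nonneg (mul_nonneg (le_trans zero_le_one hp) h1)
            (sub_nonneg.2 h)]
  · rw [abs_sub_comm (w^p), abs_sub_comm w v,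
      abs_of_nonneg (sub_nonneg.2 (Real.rpow_le_rpow hw h (by linarith))),
      abs_of_nonneg (sub_nonneg.2 h)]
    calc v ^ p - w ^ p ≤ p * v ^ (p - 1) * (v - w) := rpow_sub_rpow_le_aux_s9 hp hw h
      _ ≤ p * (w ^ (p - 1) + v ^ (p - 1)) * (v - w) := by
          have h1 : (0:ℝ) ≤ w ^ (p - 1) := Real.rpow_nonneg hw _
          nlinarith [mul_nonneg (mul_nonneg (le_trans zero_le_one hp) h1)
            (sub_nonneg.2 h)]

/-- Continuity bound for normalized functionals of persistence diagrams
(per-matching form). -/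
theorem stmt_9 {𝕋 : Type*} (L C U ε δ p : ℝ)
    (hL : 0 ≤ L) (hC : 0 ≤ C) (hU : 0 ≤ U) (hε : 0 ≤ ε) (hδ : 0 ≤ δ) (hp : 1 ≤ p)
    (k : ℝ × ℝ → 𝕋 → ℝ)
    (hkLip : ∀ x x' : ℝ × ℝ, ∀ t : 𝕋,
      |k x t - k x' t| ≤ L * max |x.1 - x'.1| |x.2 - x'.2|)
    (hkDiag : ∀ r : ℝ, ∀ t : 𝕋, |k (r, r) t| ≤ C)
    {ι : Type*} [Fintype ι] (x y : ι → ℝ × ℝ)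
    (hx : ∀ i, (x i).1 ≤ (x i).2 ∧ (x i).2 ≤ (x i).1 + U)
    (hy : ∀ i, (y i).1 ≤ (y i).2 ∧ (y i).2 ≤ (y i).1 + U)
    (hxy : ∀ i, max |(x i).1 - (y i).1| |(x i).2 - (y i).2| ≤ δ)
    (hWx : 0 < ∑ i, wtrunc ε (x i) ^ p) (hWy : 0 < ∑ i, wtrunc ε (y i) ^ p)
    (t : 𝕋) :
    |(∑ i, wtrunc ε (x i) ^ p * k (x i) t) / (∑ i, wtrunc ε (x i) ^ p)
      - (∑ i, wtrunc ε (y i) ^ p * k (y i) t) / (∑ i, wtrunc ε (y i) ^ p)|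
      ≤ (L + 4 * p * (L * U + C) *
          (∑ i, wtrunc ε (x i) ^ (p - 1) + ∑ i, wtrunc ε (y i) ^ (p - 1))
            / (∑ i, wtrunc ε (x i) ^ p)) * δ := by
  set w : ι → ℝ := fun i => wtrunc ε (x i) with hw_def
  set v : ι → ℝ := fun i => wtrunc ε (y i) with hv_def
  set W : ℝ := ∑ i, w i ^ p with hW_def
  set V : ℝ := ∑ i, v i ^ p with hV_def
  have hw0 : ∀ i, 0 ≤ w i := fun i => le_max_right _ _
  have hv0 : ∀ i, 0 ≤ v i := fun i => le_max_right _ _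
  have hwp0 : ∀ i, 0 ≤ w i ^ p := fun i => Real.rpow_nonneg (hw0 i) p
  have hvp0 : ∀ i, 0 ≤ v i ^ p := fun i => Real.rpow_nonneg (hv0 i) p
  -- Lipschitz bound per index
  have hlip : ∀ i, |k (x i) t - k (y i) t| ≤ L * δ := by
    intro i
    refine (hkLip (x i) (y i) t).trans ?_
    exact mul_le_mul_of_nonneg_left (hxy i) hL
  -- bound on |k (y i) t|
  have hkb : ∀ i, |k (y i) t| ≤ L * U + C := by
    intro i
    have h1 := hkLip (y i) ((y i).1, (y i).1) t
    have h2 := hkDiag (y i).1 t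
    have hy1 := (hy i).1
    have hy2 := (hy i).2
    have hmax : max |(y i).1 - (y i).1| |(y i).2 - (y i).1| ≤ U := by
      rw [sub_self, abs_zero, abs_of_nonneg (by linarith)]
      simp only [max_le_iff]
      constructor <;> linarith
    have h1' : |k (y i) t - k ((y i).1, (y i).1) t| ≤ L * U :=
      h1.trans (mul_le_mul_of_nonneg_left hmax hL)
    calc |k (y i) t| = |(k (y i) t - k ((y i).1, (y i).1) t) + k ((y i).1, (y i).1) t| := by
          ring_nf
      _ ≤ |k (y i) t - k ((y i).1, (y i).1) t| + |k ((y i).1, (y i).1) t| := abs_add_le _ _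
      _ ≤ L * U + C := add_le_add h1' h2
  -- weight difference
  have hwv : ∀ i, |w i - v i| ≤ 2 * δ := by
    intro i
    have h := abs_max_sub_max_le_abs ((x i).2 - (x i).1 - ε) ((y i).2 - (y i).1 - ε) 0
    have h1 : |(x i).1 - (y i).1| ≤ δ := le_trans (le_max_left _ _) (hxy i)
    have h2 : |(x i).2 - (y i).2| ≤ δ := le_trans (le_max_right _ _) (hxy i)
    have key : |(x i).2 - (x i).1 - ε - ((y i).2 - (y i).1 - ε)| ≤ 2 * δ := by
      have : (x i).2 - (x i).1 - ε - ((y i).2 - (y i).1 - ε)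
          = ((x i).2 - (y i).2) - ((x i).1 - (y i).1) := by ring
      rw [this]
      calc |((x i).2 - (y i).2) - ((x i).1 - (y i).1)|
          ≤ |(x i).2 - (y i).2| + |(x i).1 - (y i).1| := abs_sub _ _
        _ ≤ 2 * δ := by linarith
    exact h.trans key
  -- difference of p-th powers
  have hD : ∀ i, |w i ^ p - v i ^ p| ≤ 2 * p * δ * (w i ^ (p-1) + v i ^ (p-1)) := by
    intro i
    calc |w i ^ p - v i ^ p| ≤ p * (w i ^ (p-1) + v i ^ (p-1)) * |w i - v i| :=
          abs_rpow_sub_rpow_le_s9 hp (hv0 i) (hw0 i)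
      _ ≤ p * (w i ^ (p-1) + v i ^ (p-1)) * (2 * δ) := by
          refine mul_le_mul_of_nonneg_left (hwv i) ?_
          have := Real.rpow_nonneg (hw0 i) (p-1)
          have := Real.rpow_nonneg (hv0 i) (p-1)
          positivity
      _ = 2 * p * δ * (w i ^ (p-1) + v i ^ (p-1)) := by ring
  set D : ℝ := ∑ i, |w i ^ p - v i ^ p| with hD_def
  set T : ℝ := ∑ i, w i ^ (p-1) + ∑ i, v i ^ (p-1) with hT_def
  have hD_le : D ≤ 2 * p * δ * T := by
    calc D ≤ ∑ i, 2 * p * δ * (w i ^ (p-1) + v i ^ (p-1)) :=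
          Finset.sum_le_sum (fun i _ => hD i)
      _ = 2 * p * δ * T := by
          rw [← Finset.mul_sum, hT_def, Finset.sum_add_distrib]
  have hVW : |V - W| ≤ D := by
    calc |V - W| = |∑ i, (v i ^ p - w i ^ p)| := by rw [Finset.sum_sub_distrib]
      _ ≤ ∑ i, |v i ^ p - w i ^ p| := Finset.abs_sum_le_sum_abs _ _
      _ = D := by
          rw [hD_def]; exact Finset.sum_congr rfl (fun i _ => abs_sub_comm _ _)
  have hD0 : 0 ≤ D := Finset.sum_nonneg (fun i _ => abs_nonneg _)
  -- ratio differences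
  have hS : ∑ i, |w i ^ p / W - v i ^ p / V| ≤ 2 * D / W := by
    have hterm : ∀ i, |w i ^ p / W - v i ^ p / V|
        ≤ |w i ^ p - v i ^ p| / W + v i ^ p * (|V - W| / (W * V)) := by
      intro i
      have heq : w i ^ p / W - v i ^ p / V
          = (w i ^ p - v i ^ p) / W + v i ^ p * ((V - W) / (W * V)) := by
        field_simp
        ring
      rw [heq]
      refine (abs_add_le _ _).trans (add_le_add ?_ ?_)
      · rw [abs_div, abs_of_pos hWx]
      · rw [abs_mul, abs_of_nonneg (hvp0 i), abs_div,
          abs_of_pos (mul_pos hWx hWy)]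
    calc ∑ i, |w i ^ p / W - v i ^ p / V|
        ≤ ∑ i, (|w i ^ p - v i ^ p| / W + v i ^ p * (|V - W| / (W * V))) :=
          Finset.sum_le_sum (fun i _ => hterm i)
      _ = D / W + V * (|V - W| / (W * V)) := by
          rw [Finset.sum_add_distrib, ← Finset.sum_div, ← Finset.sum_mul]
      _ = D / W + |V - W| / W := by
          have hW0 : W ≠ 0 := hWx.ne'
          have hV0 : V ≠ 0 := hWy.ne'
          congr 1
          field_simp
      _ ≤ D / W + D / W := by
          gcongr
      _ = 2 * D / W := by ring
  -- main decomposition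
  have decomp : (∑ i, w i ^ p * k (x i) t) / W - (∑ i, v i ^ p * k (y i) t) / V
      = ∑ i, ((w i ^ p / W) * (k (x i) t - k (y i) t)
          + (w i ^ p / W - v i ^ p / V) * k (y i) t) := by
    rw [Finset.sum_div, Finset.sum_div, ← Finset.sum_sub_distrib]
    exact Finset.sum_congr rfl (fun i _ => by ring)
  have hsum1 : ∑ i, w i ^ p / W = 1 := by
    rw [← Finset.sum_div, div_self hWx.ne']
  calc |(∑ i, w i ^ p * k (x i) t) / W - (∑ i, v i ^ p * k (y i) t) / V|
      = |∑ i, ((w i ^ p / W) * (k (x i) t - k (y i) t)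
          + (w i ^ p / W - v i ^ p / V) * k (y i) t)| := by rw [decomp]
    _ ≤ ∑ i, |(w i ^ p / W) * (k (x i) t - k (y i) t)
          + (w i ^ p / W - v i ^ p / V) * k (y i) t| := Finset.abs_sum_le_sum_abs _ _
    _ ≤ ∑ i, ((w i ^ p / W) * (L * δ) + |w i ^ p / W - v i ^ p / V| * (L * U + C)) := by
        refine Finset.sum_le_sum (fun i _ => ?_)
        refine (abs_add_le _ _).trans (add_le_add ?_ ?_)
        · rw [abs_mul, abs_of_nonneg (div_nonneg (hwp0 i) hWx.le)]
          exact mul_le_mul_of_nonneg_left (hlip i) (div_nonneg (hwp0 i) hWx.le)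
        · rw [abs_mul]
          exact mul_le_mul_of_nonneg_left (hkb i) (abs_nonneg _)
    _ = L * δ + (∑ i, |w i ^ p / W - v i ^ p / V|) * (L * U + C) := by
        rw [Finset.sum_add_distrib, ← Finset.sum_mul, ← Finset.sum_mul, hsum1, one_mul]
    _ ≤ L * δ + (2 * D / W) * (L * U + C) := by
        gcongr <;> positivity
    _ ≤ L * δ + (2 * (2 * p * δ * T) / W) * (L * U + C) := by
        gcongr <;> positivity
    _ = (L + 4 * p * (L * U + C) * T / W) * δ := by ring
end

section
/- Fix σ > 0 and a real number r ≥ 1. For (b,d) ∈ ℝ², define k_{b,d} : ℝ² → ℝ by k_{b,d}(x,y) = (1/(2πσ²))·(2 − max(|b−x|, |d−y|)/σ)₊^r · exp(−((b−x)² + (d−y)²)/(2σ²)), where (a)₊ = max(a,0). Then for all (b,d), (b',d'), (x,y) ∈ ℝ²: |k_{b,d}(x,y) − k_{b',d'}(x,y)| ≤ (2^{r−1}(r+2)/(πσ³))·max(|b−b'|, |d−d'|). -/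
/-!
Write the kernel as `C · A(b,d)^r · G(b - x) · G(d - y)` with `G(t) = exp(-t²/(2σ²))`.
The cutoff `A = (2 - ‖·‖_∞/σ)₊` is `1/σ`-Lipschitz with values in `[0, 2]`, so by the
mean value theorem `A^r` is `r 2^{r-1}/σ`-Lipschitz and bounded by `2^r`. Since
`|t| ≤ σ e^{t²/(2σ²)}`, also `|G'| ≤ 1/σ`, while `0 < G ≤ 1`. Splitting each difference of
products gives the constant `2^{r-1}(r + 4)/(2πσ³)`, which is at most the claimed one.
-/

open Real Set

lemma abs_mul_sub_mul_le_of_abs_le {a a' c c' M N : ℝ} (ha' : |a'| ≤ M) (hc : |c| ≤ N) :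
    |a * c - a' * c'| ≤ N * |a - a'| + M * |c - c'| := by
  calc |a * c - a' * c'| = |(a - a') * c + a' * (c - c')| := by ring_nf
    _ ≤ |a - a'| * |c| + |a'| * |c - c'| := by
      rw [← abs_mul, ← abs_mul]; exact abs_add_le _ _
    _ ≤ N * |a - a'| + M * |c - c'| := by
      rw [mul_comm N]; gcongr

lemma abs_max_abs_sub_max_abs_le (u v u' v' : ℝ) :
    |(max |u| |v|) - (max |u'| |v'|)| ≤ max |u - u'| |v - v'| := by
  simpa [Prod.norm_def] using abs_norm_sub_norm_le (u, v) (u', v')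

section Cutoff

variable {σ : ℝ} (hσ : 0 < σ)
include hσ

lemma max_sub_div_zero_mem_Icc {c s : ℝ} (hc : 0 ≤ c) (hs : 0 ≤ s) :
    max (c - s / σ) 0 ∈ Icc 0 c :=
  ⟨le_max_right _ _, max_le (by linarith [div_nonneg hs hσ.le]) hc⟩

lemma abs_max_sub_div_zero_sub_le (c s s' : ℝ) :
    |max (c - s / σ) 0 - max (c - s' / σ) 0| ≤ |s - s'| / σ := by
  refine (abs_max_sub_max_le_abs _ _ _).trans_eq ?_
  rw [show c - s / σ - (c - s' / σ) = (s' - s) / σ by ring, abs_div, abs_of_pos hσ,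
    abs_sub_comm]

end Cutoff

lemma abs_rpow_sub_rpow_le_s10 {r c a a' : ℝ} (hr : 1 ≤ r) (ha : a ∈ Icc 0 c) (ha' : a' ∈ Icc 0 c) :
    |a ^ r - a' ^ r| ≤ r * c ^ (r - 1) * |a - a'| := by
  have hderiv_le : ∀ t ∈ Icc 0 c, ‖r * t ^ (r - 1)‖ ≤ r * c ^ (r - 1) := fun t ht => by
    rw [Real.norm_eq_abs, abs_of_nonneg (by have := rpow_nonneg ht.1 (r - 1); positivity)]
    exact mul_le_mul_of_nonneg_left (rpow_le_rpow ht.1 ht.2 (by linarith)) (by linarith)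
  simpa [Real.norm_eq_abs] using (convex_Icc 0 c).norm_image_sub_le_of_norm_hasDerivWithin_le
    (fun t _ => (hasDerivAt_rpow_const (Or.inr hr)).hasDerivWithinAt) hderiv_le ha' ha

section Gaussian

variable {σ : ℝ} (hσ : 0 < σ)
include hσ

lemma abs_le_mul_exp_sq_div (t : ℝ) : |t| ≤ σ * exp (t ^ 2 / (2 * σ ^ 2)) := by
  -- `s ≤ 1 + s²/2 ≤ exp (s²/2)` for `s = |t|/σ`
  have hquad : |t| ≤ σ * (1 + t ^ 2 / (2 * σ ^ 2)) := by
    rw [show σ * (1 + t ^ 2 / (2 * σ ^ 2)) = (2 * σ ^ 2 + t ^ 2) / (2 * σ) by field_simp,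
      le_div_iff₀ (by positivity)]
    nlinarith [sq_nonneg (|t| - σ), sq_abs t]
  exact hquad.trans (by gcongr; linarith [add_one_le_exp (t ^ 2 / (2 * σ ^ 2))])

lemma abs_exp_neg_sq_div_sub_le (u u' : ℝ) :
    |exp (-(u ^ 2 / (2 * σ ^ 2))) - exp (-(u' ^ 2 / (2 * σ ^ 2)))| ≤ |u - u'| / σ := by
  have hderiv : ∀ t : ℝ, HasDerivAt (fun s => exp (-(s ^ 2 / (2 * σ ^ 2))))
      (-(t / σ ^ 2) * exp (-(t ^ 2 / (2 * σ ^ 2)))) t := fun t => by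
    have hexponent : HasDerivAt (fun s : ℝ => -(s ^ 2 / (2 * σ ^ 2))) (-(t / σ ^ 2)) t := by
      refine (((hasDerivAt_pow 2 t).div_const (2 * σ ^ 2)).neg).congr_deriv ?_
      field_simp
      ring
    convert hexponent.exp using 1
    ring
  have hderiv_le : ∀ t : ℝ, ‖-(t / σ ^ 2) * exp (-(t ^ 2 / (2 * σ ^ 2)))‖ ≤ 1 / σ := fun t => by
    rw [Real.norm_eq_abs, abs_mul, abs_neg, abs_div, abs_of_pos (exp_pos _),
      abs_of_pos (by positivity : (0 : ℝ) < σ ^ 2)]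
    calc |t| / σ ^ 2 * exp (-(t ^ 2 / (2 * σ ^ 2)))
        ≤ σ * exp (t ^ 2 / (2 * σ ^ 2)) / σ ^ 2 * exp (-(t ^ 2 / (2 * σ ^ 2))) := by
          gcongr; exact abs_le_mul_exp_sq_div hσ t
      _ = 1 / σ := by rw [exp_neg]; field_simp
  have := convex_univ.norm_image_sub_le_of_norm_hasDerivWithin_le
    (fun t _ => (hderiv t).hasDerivWithinAt) (fun t _ => hderiv_le t) (mem_univ u') (mem_univ u)
  simpa [Real.norm_eq_abs, div_eq_inv_mul] using this

lemma abs_exp_neg_sum_sq_div_sub_le (u v u' v' : ℝ) :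
    |exp (-((u ^ 2 + v ^ 2) / (2 * σ ^ 2))) - exp (-((u' ^ 2 + v' ^ 2) / (2 * σ ^ 2)))|
      ≤ 2 * max |u - u'| |v - v'| / σ := by
  have hsplit : ∀ p q : ℝ, exp (-((p ^ 2 + q ^ 2) / (2 * σ ^ 2)))
      = exp (-(p ^ 2 / (2 * σ ^ 2))) * exp (-(q ^ 2 / (2 * σ ^ 2))) := fun p q => by
    rw [← exp_add]; ring_nf
  have hle_one : ∀ p : ℝ, |exp (-(p ^ 2 / (2 * σ ^ 2)))| ≤ 1 := fun p => by
    rw [abs_of_pos (exp_pos _), exp_le_one_iff, neg_nonpos]; positivity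
  rw [hsplit, hsplit]
  refine (abs_mul_sub_mul_le_of_abs_le (hle_one u') (hle_one v)).trans ?_
  rw [one_mul, one_mul]
  have hu := abs_exp_neg_sq_div_sub_le hσ u u'
  have hv := abs_exp_neg_sq_div_sub_le hσ v v'
  have : |u - u'| / σ + |v - v'| / σ ≤ 2 * max |u - u'| |v - v'| / σ := by
    rw [← add_div, mul_comm]
    gcongr
    linarith [le_max_left |u - u'| |v - v'|, le_max_right |u - u'| |v - v'|]
  linarith

end Gaussian

/-- Lipschitz estimate, in the diagram point `(b,d)` and uniformly in `(x,y)`, for the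
compactly supported modification of the persistence image kernel
`k_{b,d}(x,y) = (1/(2πσ²))·(2 − ‖(b,d)−(x,y)‖_∞/σ)₊^r · exp(−((b−x)²+(d−y)²)/(2σ²))`. -/
theorem stmt_10 (σ r : ℝ) (hσ : 0 < σ) (hr : 1 ≤ r) (b d b' d' x y : ℝ) :
    |(1 / (2 * π * σ ^ 2)) * (max (2 - max |b - x| |d - y| / σ) 0) ^ r *
        Real.exp (-(((b - x) ^ 2 + (d - y) ^ 2) / (2 * σ ^ 2)))
      - (1 / (2 * π * σ ^ 2)) * (max (2 - max |b' - x| |d' - y| / σ) 0) ^ r *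
        Real.exp (-(((b' - x) ^ 2 + (d' - y) ^ 2) / (2 * σ ^ 2)))|
      ≤ (2 ^ (r - 1) * (r + 2) / (π * σ ^ 3)) * max |b - b'| |d - d'| := by
  set δ := max |b - b'| |d - d'|
  set A := max (2 - max |b - x| |d - y| / σ) 0
  set A' := max (2 - max |b' - x| |d' - y| / σ) 0
  set G := exp (-(((b - x) ^ 2 + (d - y) ^ 2) / (2 * σ ^ 2)))
  set G' := exp (-(((b' - x) ^ 2 + (d' - y) ^ 2) / (2 * σ ^ 2)))
  have hA : A ∈ Icc 0 2 := max_sub_div_zero_mem_Icc hσ zero_le_two (by positivity)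
  have hA' : A' ∈ Icc 0 2 := max_sub_div_zero_mem_Icc hσ zero_le_two (by positivity)
  have hApow : |A ^ r - A' ^ r| ≤ r * 2 ^ (r - 1) * (δ / σ) := by
    refine (abs_rpow_sub_rpow_le_s10 hr hA hA').trans ?_
    gcongr
    refine (abs_max_sub_div_zero_sub_le hσ _ _ _).trans ?_
    gcongr
    simpa only [sub_sub_sub_cancel_right] using
      abs_max_abs_sub_max_abs_le (b - x) (d - y) (b' - x) (d' - y)
  have hG : |G - G'| ≤ 2 * δ / σ := by
    simpa only [sub_sub_sub_cancel_right] using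
      abs_exp_neg_sum_sq_div_sub_le hσ (b - x) (d - y) (b' - x) (d' - y)
  have hA'_le : |A' ^ r| ≤ 2 * 2 ^ (r - 1) := by
    rw [abs_of_nonneg (rpow_nonneg hA'.1 r), rpow_sub_one two_ne_zero,
      mul_div_cancel₀ _ two_ne_zero]
    exact rpow_le_rpow hA'.1 hA'.2 (by linarith)
  have hG_le : |G| ≤ 1 := by
    rw [abs_of_pos (exp_pos _), exp_le_one_iff, neg_nonpos]; positivity
  calc |1 / (2 * π * σ ^ 2) * A ^ r * G - 1 / (2 * π * σ ^ 2) * A' ^ r * G'|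
      = |(A ^ r * G - A' ^ r * G') / (2 * π * σ ^ 2)| := by ring_nf
    _ = |A ^ r * G - A' ^ r * G'| / (2 * π * σ ^ 2) := by
        rw [abs_div, abs_of_pos (by positivity : 0 < 2 * π * σ ^ 2)]
    _ ≤ (1 * (r * 2 ^ (r - 1) * (δ / σ)) + 2 * 2 ^ (r - 1) * (2 * δ / σ))
          / (2 * π * σ ^ 2) := by
        gcongr
        exact (abs_mul_sub_mul_le_of_abs_le hA'_le hG_le).trans (by gcongr)
    _ = 2 ^ (r - 1) * (r + 4) / (2 * π * σ ^ 3) * δ := by field_simp; ring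
    _ ≤ 2 ^ (r - 1) * (r + 2) / (π * σ ^ 3) * δ := by
        rw [show 2 ^ (r - 1) * (r + 2) / (π * σ ^ 3)
          = 2 ^ (r - 1) * (2 * r + 4) / (2 * π * σ ^ 3) by field_simp; ring]
        gcongr
        linarith
end

section
/- Let T > 0, let f : [0,T] → ℝ be continuous, let r ≥ 1 and α > 0 be real numbers, and suppose B ∈ [0,∞) satisfies ∫₀^T ∫₀^T |f(t) − f(s)|^r / |t − s|^{αr + 2} dt ds ≤ B. Then for all s, t ∈ [0,T]: |f(t) − f(s)| ≤ 8·(4B)^{1/r}·((α + 2/r)/α)·|t − s|^α. In particular f is α-Hölder continuous with constant 8·(4B)^{1/r}·(α + 2/r)/α. -/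
/-!
On an interval `I`, Jensen's inequality bounds `|g x - ⨍ I, g|^r` by `⨍ y ∈ I, |g x - g y|^r`;
averaging once more over a subinterval `I' ⊆ I` gives
`|⨍ I', g - ⨍ I, g|^r ≤ (∫∫_{I×I} |g x - g y|^r) / (|I| |I'|)`, and the hypothesis bounds the
double integral by `|I|^(αr+2) B`. Along intervals of lengths `u ρⁿ` (`u = t - s`) shrinking to
either endpoint of `[s, t]`, consecutive averages therefore differ by at most
`(B/ρ)^(1/r) u^α (ρ^α)ⁿ`. Summing the geometric series from `⨍ [s,t], g` to `g s` and to `g t`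
gives `|g t - g s| ≤ 2 (B/ρ)^(1/r) |t - s|^α / (1 - ρ^α)`; with `ρ = e^(-r)` and
`1 + rα ≤ e^(rα)` this constant is at most `8 (4B)^(1/r) (α + 2/r)/α`.
-/

open MeasureTheory Set Filter Topology

section Average

variable {Ω : Type*} [MeasurableSpace Ω] {μ : Measure Ω} {s : Set Ω} {f h : Ω → ℝ} {r : ℝ}

theorem setAverage_sub (hf : IntegrableOn f s μ) (hh : IntegrableOn h s μ) :
    ⨍ x in s, (f x - h x) ∂μ = ⨍ x in s, f x ∂μ - ⨍ x in s, h x ∂μ := by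
  simp only [setAverage_eq, integral_sub hf hh, smul_sub]

theorem abs_setAverage_rpow_le (hr : 1 ≤ r) (h0 : μ s ≠ 0) (hfin : μ s ≠ ⊤)
    (hh : IntegrableOn h s μ) (hhr : IntegrableOn (fun x ↦ |h x| ^ r) s μ) :
    |⨍ x in s, h x ∂μ| ^ r ≤ ⨍ x in s, |h x| ^ r ∂μ := by
  have habs : |⨍ x in s, h x ∂μ| ≤ ⨍ x in s, |h x| ∂μ := by
    simp only [setAverage_eq, smul_eq_mul, abs_mul, abs_inv, measureReal_nonneg, abs_of_nonneg]
    exact mul_le_mul_of_nonneg_left abs_integral_le_integral_abs (by positivity)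
  calc |⨍ x in s, h x ∂μ| ^ r ≤ (⨍ x in s, |h x| ∂μ) ^ r := by gcongr
    _ ≤ ⨍ x in s, |h x| ^ r ∂μ :=
      (convexOn_rpow hr).map_set_average_le (Real.continuous_rpow_const (by linarith)).continuousOn
        isClosed_Ici h0 hfin (Eventually.of_forall fun x ↦ abs_nonneg (h x)) hh.abs hhr

theorem ofReal_integral_le_lintegral_ofReal {f : Ω → ℝ} (hf : ∀ x, 0 ≤ f x) :
    ENNReal.ofReal (∫ x, f x ∂μ) ≤ ∫⁻ x, ENNReal.ofReal (f x) ∂μ := by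
  simpa only [Real.enorm_of_nonneg (integral_nonneg hf), Real.enorm_of_nonneg (hf _)] using
    enorm_integral_le_lintegral_enorm f

end Average

section Oscillation

variable {X : Type*} [TopologicalSpace X] [T2Space X] [MeasurableSpace X] [OpensMeasurableSpace X]
  {μ : Measure X} [IsFiniteMeasureOnCompacts μ] {g : X → ℝ} {s s' : Set X} {r : ℝ}

theorem abs_sub_setAverage_rpow_le (hg : Continuous g) (hr : 1 ≤ r) (hs : IsCompact s)
    (h0 : μ s ≠ 0) (x : X) :
    |g x - ⨍ y in s, g y ∂μ| ^ r ≤ ⨍ y in s, |g x - g y| ^ r ∂μ := by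
  have hfin := (hs.measure_lt_top (μ := μ)).ne
  have hr0 : 0 ≤ r := by linarith
  have hgx : Continuous fun y ↦ |g x - g y| ^ r := by fun_prop (disch := assumption)
  have hconst : g x - ⨍ y in s, g y ∂μ = ⨍ y in s, (g x - g y) ∂μ := by
    rw [setAverage_sub (integrableOn_const hfin) (hg.continuousOn.integrableOn_compact hs),
      setAverage_const h0 hfin]
  rw [hconst]
  exact abs_setAverage_rpow_le hr h0 hfin
    ((continuous_const.sub hg).continuousOn.integrableOn_compact hs)
    (hgx.continuousOn.integrableOn_compact hs)

theorem abs_setAverage_sub_setAverage_rpow_le [LocallyCompactSpace X] [FirstCountableTopology X]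
    (hg : Continuous g) (hr : 1 ≤ r) (hs : IsCompact s) (hs' : IsCompact s') (hs's : s' ⊆ s)
    (h0 : μ s' ≠ 0) :
    |⨍ x in s', g x ∂μ - ⨍ x in s, g x ∂μ| ^ r ≤
      (∫ x in s, ∫ y in s, |g x - g y| ^ r ∂μ ∂μ) / (μ.real s * μ.real s') := by
  set A := ⨍ x in s, g x ∂μ
  set Φ : X → ℝ := fun x ↦ ∫ y in s, |g x - g y| ^ r ∂μ
  have hr0 : 0 ≤ r := by linarith
  have hs0 : μ s ≠ 0 := fun h ↦ h0 (measure_mono_null hs's h)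
  have hfin' := (hs'.measure_lt_top (μ := μ)).ne
  have hint : ∀ {φ : X → ℝ} {K : Set X}, IsCompact K → Continuous φ → IntegrableOn φ K μ :=
    fun hK hφ ↦ hφ.continuousOn.integrableOn_compact hK
  have hgA : Continuous fun x ↦ |g x - A| ^ r := by fun_prop (disch := assumption)
  have hΦ : Continuous Φ := continuous_parametric_integral_of_continuous (by fun_prop) hs
  have hΦ0 : ∀ x, 0 ≤ Φ x := fun x ↦ integral_nonneg fun y ↦ by positivity
  have hpt : ∀ x, |g x - A| ^ r ≤ (μ.real s)⁻¹ * Φ x := fun x ↦ by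
    have := abs_sub_setAverage_rpow_le hg hr hs hs0 x
    rwa [setAverage_eq μ (fun y ↦ |g x - g y| ^ r), smul_eq_mul] at this
  have hconst : ⨍ x in s', g x ∂μ - A = ⨍ x in s', (g x - A) ∂μ := by
    rw [setAverage_sub (hint hs' hg) (integrableOn_const hfin'), setAverage_const h0 hfin']
  calc |⨍ x in s', g x ∂μ - A| ^ r ≤ ⨍ x in s', |g x - A| ^ r ∂μ := by
        rw [hconst]
        exact abs_setAverage_rpow_le hr h0 hfin' (hint hs' (hg.sub continuous_const)) (hint hs' hgA)
    _ ≤ (μ.real s')⁻¹ * ∫ x in s', (μ.real s)⁻¹ * Φ x ∂μ := by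
        rw [setAverage_eq, smul_eq_mul]
        refine mul_le_mul_of_nonneg_left ?_ (by positivity)
        exact setIntegral_mono_on (hint hs' hgA) (hint hs' (continuous_const.mul hΦ))
          hs'.measurableSet fun x _ ↦ hpt x
    _ ≤ (μ.real s')⁻¹ * ((μ.real s)⁻¹ * ∫ x in s, Φ x ∂μ) := by
        rw [integral_const_mul]
        refine mul_le_mul_of_nonneg_left (mul_le_mul_of_nonneg_left ?_ (by positivity))
          (by positivity)
        exact setIntegral_mono_set (hint hs hΦ) (Eventually.of_forall hΦ0)
          (Eventually.of_forall hs's)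
    _ = (∫ x in s, Φ x ∂μ) / (μ.real s * μ.real s') := by
        rw [mul_comm (μ.real s)]; field_simp

end Oscillation

section Convergence

variable {X : Type*} [TopologicalSpace X] [MeasurableSpace X] {μ : Measure X} {g : X → ℝ}

theorem tendsto_setAverage_of_tendsto_smallSets {ι : Type*} {l : Filter ι} {x₀ : X}
    {s : ι → Set X} (hg : ContinuousAt g x₀) (hs : Tendsto s l (𝓝 x₀).smallSets)
    (h0 : ∀ i, μ (s i) ≠ 0) (hfin : ∀ i, μ (s i) ≠ ⊤) (hint : ∀ i, IntegrableOn g (s i) μ) :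
    Tendsto (fun i ↦ ⨍ x in s i, g x ∂μ) l (𝓝 (g x₀)) := by
  choose a ha hga using fun i ↦ exists_le_setAverage (h0 i) (hfin i) (hint i)
  choose b hb hgb using fun i ↦ exists_setAverage_le (h0 i) (hfin i) (hint i)
  exact tendsto_of_tendsto_of_tendsto_of_le_of_le
    (hg.tendsto.comp (hs.of_smallSets (Eventually.of_forall ha)))
    (hg.tendsto.comp (hs.of_smallSets (Eventually.of_forall hb))) hga hgb

end Convergence

section Chain

variable {g : ℝ → ℝ} {r α B u ρ x₀ : ℝ} {p q : ℕ → ℝ}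

theorem abs_sub_setAverage_Icc_le_of_nested (hg : Continuous g) (hr : 1 ≤ r) (hα : 0 < α)
    (hB : 0 ≤ B) (hu : 0 < u) (hρ0 : 0 < ρ) (hρ1 : ρ < 1) (hlen : ∀ n, q n - p n = u * ρ ^ n)
    (hmono : ∀ n, Icc (p (n + 1)) (q (n + 1)) ⊆ Icc (p n) (q n))
    (hx₀ : ∀ n, x₀ ∈ Icc (p n) (q n))
    (hloc : ∀ n, ∫ x in Icc (p n) (q n), ∫ y in Icc (p n) (q n), |g x - g y| ^ r ≤
      (q n - p n) ^ (α * r + 2) * B) :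
    |g x₀ - ⨍ x in Icc (p 0) (q 0), g x| ≤ (B / ρ) ^ (1 / r) * u ^ α / (1 - ρ ^ α) := by
  have hr0 : 0 < r := by linarith
  have hℓ : ∀ n, 0 < u * ρ ^ n := fun n ↦ by positivity
  have hvol : ∀ n, volume.real (Icc (p n) (q n)) = u * ρ ^ n := fun n ↦ by
    rw [Real.volume_real_Icc_of_le (by linarith [hlen n, hℓ n]), hlen]
  have hvol0 : ∀ n, volume (Icc (p n) (q n)) ≠ 0 := fun n ↦ by
    rw [Real.volume_Icc]; exact (ENNReal.ofReal_pos.2 (by linarith [hlen n, hℓ n])).ne'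
  have hstep : ∀ n, dist (⨍ x in Icc (p n) (q n), g x) (⨍ x in Icc (p (n + 1)) (q (n + 1)), g x)
      ≤ (B / ρ) ^ (1 / r) * u ^ α * (ρ ^ α) ^ n := fun n ↦ by
    have hρn : (ρ ^ n) ^ α = (ρ ^ α) ^ n := by
      rw [← Real.rpow_natCast_mul hρ0.le, ← Real.rpow_mul_natCast hρ0.le, mul_comm]
    have key := abs_setAverage_sub_setAverage_rpow_le hg hr isCompact_Icc isCompact_Icc (hmono n)
      (hvol0 (n + 1))
    rw [hvol, hvol] at key
    rw [dist_comm, Real.dist_eq]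
    refine (Real.rpow_le_rpow_iff (abs_nonneg _) (by positivity) hr0).1 ?_
    refine key.trans ((div_le_div_of_nonneg_right (hloc n) (by positivity)).trans_eq ?_)
    have hC : ((B / ρ) ^ (1 / r) * u ^ α * (ρ ^ α) ^ n) ^ r = B / ρ * (u * ρ ^ n) ^ (α * r) := by
      rw [mul_assoc, ← hρn, ← Real.mul_rpow hu.le (by positivity),
        Real.mul_rpow (by positivity) (by positivity), ← Real.rpow_mul (by positivity),
        ← Real.rpow_mul (hℓ n).le, one_div_mul_cancel hr0.ne', Real.rpow_one]
    rw [hC, hlen, Real.rpow_add (hℓ n), Real.rpow_two]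
    field_simp
    ring
  have hlim : Tendsto (fun n ↦ ⨍ x in Icc (p n) (q n), g x) atTop (𝓝 (g x₀)) := by
    have hℓ0 : Tendsto (fun n ↦ u * ρ ^ n) atTop (𝓝 0) := by
      simpa using (tendsto_pow_atTop_nhds_zero_of_lt_one hρ0.le hρ1).const_mul u
    refine tendsto_setAverage_of_tendsto_smallSets hg.continuousAt
      (((tendsto_closedBall_smallSets x₀).comp hℓ0).smallSets_mono
        (Eventually.of_forall fun n ↦ ?_)) hvol0 (fun n ↦ measure_Icc_lt_top.ne)
      (fun n ↦ hg.integrableOn_Icc)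
    rw [Function.comp_apply, Real.closedBall_eq_Icc]
    exact Icc_subset_Icc (by linarith [hlen n, (hx₀ n).2]) (by linarith [hlen n, (hx₀ n).1])
  rw [abs_sub_comm, ← Real.dist_eq]
  exact dist_le_of_le_geometric_of_tendsto₀ _ _
    (Real.rpow_lt_one hρ0.le hρ1 hα) hstep hlim

end Chain

section Localization

variable {X : Type*} [MetricSpace X] [MeasurableSpace X] {μ : Measure X} {g : X → ℝ}
  {s S : Set X} {r p B : ℝ}

theorem integral_integral_rpow_le_of_lintegral_le (hr : 0 < r) (hp : 0 ≤ p) (hB : 0 ≤ B)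
    (hs : Bornology.IsBounded s) (hsm : MeasurableSet s) (hsS : s ⊆ S)
    (hint : ∫⁻ x in S, ∫⁻ y in S, ENNReal.ofReal (|g x - g y| ^ r / dist x y ^ p) ∂μ ∂μ ≤
      ENNReal.ofReal B) :
    ∫ x in s, ∫ y in s, |g x - g y| ^ r ∂μ ∂μ ≤ Metric.diam s ^ p * B := by
  set c := Metric.diam s ^ p
  set Q : X → X → ℝ := fun x y ↦ |g x - g y| ^ r / dist x y ^ p
  have hpt : ∀ x ∈ s, ∀ y ∈ s, |g x - g y| ^ r ≤ c * Q x y := fun x hx y hy ↦ by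
    rcases eq_or_ne x y with rfl | hxy
    · simp [Q, Real.zero_rpow hr.ne']
    · have hd : 0 < dist x y ^ p := Real.rpow_pos_of_pos (dist_pos.2 hxy) p
      calc |g x - g y| ^ r = dist x y ^ p * Q x y := (mul_div_cancel₀ _ hd.ne').symm
        _ ≤ c * Q x y := by
          simp only [c, Q]
          gcongr
          exact Metric.dist_le_diam_of_mem hs hx hy
  have hinner : ∀ x ∈ s, ∫⁻ y in s, ENNReal.ofReal (|g x - g y| ^ r) ∂μ ≤
      ENNReal.ofReal c * ∫⁻ y in S, ENNReal.ofReal (Q x y) ∂μ := fun x hx ↦ by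
    rw [← lintegral_const_mul' _ _ ENNReal.ofReal_ne_top]
    calc ∫⁻ y in s, ENNReal.ofReal (|g x - g y| ^ r) ∂μ
        ≤ ∫⁻ y in s, ENNReal.ofReal c * ENNReal.ofReal (Q x y) ∂μ :=
          setLIntegral_mono' hsm fun y hy ↦ by
            rw [← ENNReal.ofReal_mul (by positivity)]
            exact ENNReal.ofReal_le_ofReal (hpt x hx y hy)
      _ ≤ _ := lintegral_mono_set hsS
  have hle : ENNReal.ofReal (∫ x in s, ∫ y in s, |g x - g y| ^ r ∂μ ∂μ) ≤
      ENNReal.ofReal (c * B) := calc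
    _ ≤ ∫⁻ x in s, ENNReal.ofReal (∫ y in s, |g x - g y| ^ r ∂μ) ∂μ :=
        ofReal_integral_le_lintegral_ofReal fun x ↦ integral_nonneg fun y ↦ by positivity
    _ ≤ ∫⁻ x in s, ∫⁻ y in s, ENNReal.ofReal (|g x - g y| ^ r) ∂μ ∂μ :=
        lintegral_mono fun x ↦ ofReal_integral_le_lintegral_ofReal fun y ↦ by positivity
    _ ≤ ∫⁻ x in s, ENNReal.ofReal c * ∫⁻ y in S, ENNReal.ofReal (Q x y) ∂μ ∂μ :=
        setLIntegral_mono' hsm hinner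
    _ ≤ ENNReal.ofReal c * ∫⁻ x in S, ∫⁻ y in S, ENNReal.ofReal (Q x y) ∂μ ∂μ := by
        rw [lintegral_const_mul' _ _ ENNReal.ofReal_ne_top]
        exact mul_le_mul_right (lintegral_mono_set hsS) _
    _ ≤ ENNReal.ofReal (c * B) := by
        rw [ENNReal.ofReal_mul (by positivity)]
        exact mul_le_mul_right hint _
  exact (ENNReal.ofReal_le_ofReal_iff (by positivity)).1 hle

end Localization

section Holder

variable {g : ℝ → ℝ} {S : Set ℝ} {r α B ρ : ℝ}

theorem abs_sub_le_of_lintegral_le (hg : Continuous g) (hS : S.OrdConnected) (hr : 1 ≤ r)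
    (hα : 0 < α) (hB : 0 ≤ B) (hρ0 : 0 < ρ) (hρ1 : ρ < 1)
    (hint : ∫⁻ x in S, ∫⁻ y in S, ENNReal.ofReal (|g x - g y| ^ r / |x - y| ^ (α * r + 2)) ≤
      ENNReal.ofReal B) {s t : ℝ} (hs : s ∈ S) (ht : t ∈ S) :
    |g t - g s| ≤ 2 * (B / ρ) ^ (1 / r) / (1 - ρ ^ α) * |t - s| ^ α := by
  wlog hst : s < t generalizing s t
  · rcases (not_lt.1 hst).eq_or_lt with rfl | hts
    · simp [Real.zero_rpow hα.ne']
    · simpa only [abs_sub_comm] using this ht hs hts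
  obtain ⟨u, rfl⟩ : ∃ u, t = s + u := ⟨t - s, by ring⟩
  have hu : 0 < u := by linarith
  have hloc : ∀ a b, a ≤ b → Icc a b ⊆ Icc s (s + u) →
      ∫ x in Icc a b, ∫ y in Icc a b, |g x - g y| ^ r ≤ (b - a) ^ (α * r + 2) * B :=
    fun a b hab hsub ↦ by
      simpa only [Real.diam_Icc hab] using integral_integral_rpow_le_of_lintegral_le
        (by linarith) (by positivity) hB (Metric.isBounded_Icc _ _) measurableSet_Icc
        (hsub.trans (hS.out hs ht)) hint
  have hρn : ∀ n : ℕ, 0 < u * ρ ^ n ∧ u * ρ ^ n ≤ u ∧ u * ρ ^ (n + 1) ≤ u * ρ ^ n := fun n ↦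
    ⟨by positivity, mul_le_of_le_one_right hu.le (pow_le_one₀ hρ0.le hρ1.le),
      mul_le_mul_of_nonneg_left (pow_le_pow_of_le_one hρ0.le hρ1.le n.le_succ) hu.le⟩
  have hright := abs_sub_setAverage_Icc_le_of_nested (p := fun n ↦ s + u - u * ρ ^ n)
    (q := fun _ ↦ s + u) (x₀ := s + u) hg hr hα hB hu hρ0 hρ1 (fun n ↦ sub_sub_cancel _ _)
    (fun n ↦ Icc_subset_Icc_left (by linarith [hρn n]))
    (fun n ↦ ⟨by linarith [hρn n], le_rfl⟩)
    (fun n ↦ hloc _ _ (by linarith [hρn n]) (Icc_subset_Icc_left (by linarith [hρn n])))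
  have hleft := abs_sub_setAverage_Icc_le_of_nested (p := fun _ ↦ s) (q := fun n ↦ s + u * ρ ^ n)
    (x₀ := s) hg hr hα hB hu hρ0 hρ1 (fun n ↦ add_sub_cancel_left _ _)
    (fun n ↦ Icc_subset_Icc_right (by linarith [hρn n]))
    (fun n ↦ ⟨le_rfl, by linarith [hρn n]⟩)
    (fun n ↦ hloc _ _ (by linarith [hρn n]) (Icc_subset_Icc_right (by linarith [hρn n])))
  simp only [pow_zero, mul_one, add_sub_cancel_right] at hright hleft
  set A := ⨍ x in Icc s (s + u), g x
  rw [add_sub_cancel_left, abs_of_pos hu]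
  calc |g (s + u) - g s| ≤ |g (s + u) - A| + |A - g s| := abs_sub_le _ _ _
    _ ≤ 2 * ((B / ρ) ^ (1 / r) * u ^ α / (1 - ρ ^ α)) := by rw [abs_sub_comm A]; linarith
    _ = _ := by ring

theorem two_mul_div_exp_rpow_le (hr : 1 ≤ r) (hα : 0 < α) (hB : 0 ≤ B) :
    2 * (B / Real.exp (-r)) ^ (1 / r) / (1 - Real.exp (-r) ^ α) ≤
      8 * (4 * B) ^ (1 / r) * ((α + 2 / r) / α) := by
  have hr0 : 0 < r := by linarith
  set E := Real.exp (-(r * α))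
  have hE1 : E < 1 := Real.exp_lt_one_iff.2 (by nlinarith)
  have hEm : E * (r * α + 1) ≤ 1 := calc
    E * (r * α + 1) ≤ E * Real.exp (r * α) := by gcongr; exact Real.add_one_le_exp _
    _ = 1 := by rw [← Real.exp_add, neg_add_cancel, Real.exp_zero]
  have hroot : (B / Real.exp (-r)) ^ (1 / r) = Real.exp 1 * B ^ (1 / r) := by
    rw [div_eq_mul_inv, ← Real.exp_neg, neg_neg, Real.mul_rpow hB (Real.exp_pos r).le,
      ← Real.exp_mul, mul_one_div_cancel hr0.ne', mul_comm]
  have hpow : Real.exp (-r) ^ α = E := by rw [← Real.exp_mul, neg_mul]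
  have hconst : 2 * (Real.exp 1 * B ^ (1 / r)) ≤ 8 * (4 * B) ^ (1 / r) := by
    have he : Real.exp 1 ≤ 4 := by linarith [Real.exp_one_lt_d9]
    have hB4 : B ^ (1 / r) ≤ (4 * B) ^ (1 / r) := by gcongr; linarith
    nlinarith [Real.rpow_nonneg hB (1 / r)]
  have hgeom : 1 / (1 - E) ≤ (α + 2 / r) / α := by
    rw [div_le_div_iff₀ (by linarith) hα]
    have : E * (α + 1 / r) ≤ 1 / r := by
      rw [show α + 1 / r = (r * α + 1) / r by field_simp]
      rw [mul_div_assoc']; exact div_le_div_of_nonneg_right hEm hr0.le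
    have h1 : E * (1 / r) ≤ 1 / r := mul_le_of_le_one_left (by positivity) hE1.le
    have : (α + 2 / r) * (1 - E) = α + (1 / r - E * (α + 1 / r)) + (1 / r - E * (1 / r)) := by
      ring
    linarith
  rw [hroot, hpow, div_eq_mul_one_div]
  exact mul_le_mul hconst hgeom (by positivity) (by positivity)

end Holder

/-- Garsia–Rodemich–Rumsey inequality specialized to `G(u) = u^r`,
`δ(u) = u^{α+2/r}`: a bound on the double integral of
`|f(t)−f(s)|^r / |t−s|^{αr+2}` yields α-Hölder continuity of `f` on `[0,T]` with
constant `8·(4B)^{1/r}·(α+2/r)/α`. -/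
theorem stmt_12 (T : ℝ) (hT : 0 < T) (f : ℝ → ℝ) (hf : ContinuousOn f (Set.Icc 0 T))
    (r α B : ℝ) (hr : 1 ≤ r) (hα : 0 < α) (hB : 0 ≤ B)
    (hint : (∫⁻ t in Set.Icc (0:ℝ) T, ∫⁻ s in Set.Icc (0:ℝ) T,
        ENNReal.ofReal (|f t - f s| ^ r / |t - s| ^ (α * r + 2)))
      ≤ ENNReal.ofReal B) :
    ∀ s ∈ Set.Icc (0:ℝ) T, ∀ t ∈ Set.Icc (0:ℝ) T,
      |f t - f s| ≤ 8 * (4 * B) ^ (1 / r) * ((α + 2 / r) / α) * |t - s| ^ α := by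
  set g := IccExtend hT.le ((Icc 0 T).domRestrict f)
  have hg : Continuous g := continuous_IccExtend_iff.2 hf.domRestrict
  have hgf : EqOn g f (Icc 0 T) := fun x hx ↦ IccExtend_of_mem _ _ hx
  have hint' : ∫⁻ x in Icc 0 T, ∫⁻ y in Icc 0 T,
      ENNReal.ofReal (|g x - g y| ^ r / |x - y| ^ (α * r + 2)) ≤ ENNReal.ofReal B := by
    refine le_of_eq_of_le (setLIntegral_congr_fun measurableSet_Icc fun x hx ↦ ?_) hint
    exact setLIntegral_congr_fun measurableSet_Icc fun y hy ↦ by rw [hgf hx, hgf hy]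
  intro s hs t ht
  rw [← hgf hs, ← hgf ht]
  calc |g t - g s| ≤ 2 * (B / Real.exp (-r)) ^ (1 / r) / (1 - Real.exp (-r) ^ α) * |t - s| ^ α :=
        abs_sub_le_of_lintegral_le hg ordConnected_Icc hr hα hB (Real.exp_pos _)
          (Real.exp_lt_one_iff.2 (by linarith)) hint' hs ht
    _ ≤ _ := by gcongr; exact two_mul_div_exp_rpow_le hr hα hB
end
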